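/- Band localization of an optimal crossing point: for all lists A1, A2, B over a type with decidable equality, setting k = d(A1 ++ A2, B), there exists y with 0 ≤ y ≤ B.length such that |y − A1.length| ≤ k and d(A1 ++ A2, B) = d(A1, B.take y) + d(A2, B.drop y). Hence an optimal edit path can be chosen to cross every row of the DP grid within the diagonal band of half-width k. -/

import Mathlib

/-- Costs for the Levenshtein edit distance (as in the former Mathlib `Levenshtein.Cost`). -/
structure Levenshtein.Cost (α β δ : Type*) where
  delete : α → δ
  insert : β → δ
  substitute : α → β → δ

/-- The default unit cost (as in the former Mathlib `Levenshtein.defaultCost`). -/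
def Levenshtein.defaultCost {α : Type*} [DecidableEq α] : Levenshtein.Cost α α ℕ where
  delete _ := 1
  insert _ := 1
  substitute a b := if a = b then 0 else 1

/-- The Levenshtein distance, by the recursion that characterised the former Mathlib
`levenshtein` (`levenshtein_nil_nil`, `levenshtein_nil_cons`, `levenshtein_cons_nil`,
`levenshtein_cons_cons`). -/
def levenshtein {α β δ : Type*} [AddZeroClass δ] [Min δ] (C : Levenshtein.Cost α β δ) :
    List α → List β → δ
  | [], [] => 0
  | [], y :: ys => C.insert y + levenshtein C [] ys
  | x :: xs, [] => C.delete x + levenshtein C xs []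
  | x :: xs, y :: ys =>
    min (C.delete x + levenshtein C xs (y :: ys))
      (min (C.insert y + levenshtein C (x :: xs) ys) (C.substitute x y + levenshtein C xs ys))

/-- The unit-cost Levenshtein edit distance. -/
def editDist {α : Type*} [DecidableEq α] (A B : List α) : ℕ :=
  levenshtein Levenshtein.defaultCost A B

/-!
Following an optimal alignment of `A₁ ++ A₂` with `B` until it has consumed `A₁` splits `B`
at some `y` with `d(A₁ ++ A₂, B) ≥ d(A₁, B.take y) + d(A₂, B.drop y)`; the reverse inequality
is subadditivity under concatenation. The band condition then holds because an edit distance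
dominates the difference of the lengths, and `d(A₁, B.take y)` is a summand of `d(A₁ ++ A₂, B)`.
-/

section EditDist

variable {α : Type*} [DecidableEq α]

@[simp]
lemma editDist_nil_left (B : List α) : editDist [] B = B.length := by
  induction B with
  | nil => simp [editDist, levenshtein]
  | cons b B ih =>
    simp only [editDist, levenshtein, Levenshtein.defaultCost] at ih ⊢
    rw [ih, List.length_cons, add_comm]

@[simp]
lemma editDist_nil_right (A : List α) : editDist A [] = A.length := by
  induction A with
  | nil => simp [editDist, levenshtein]
  | cons a A ih =>
    simp only [editDist, levenshtein, Levenshtein.defaultCost] at ih ⊢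
    rw [ih, List.length_cons, add_comm]

lemma editDist_cons_cons (a : α) (A : List α) (b : α) (B : List α) :
    editDist (a :: A) (b :: B) =
      min (1 + editDist A (b :: B))
        (min (1 + editDist (a :: A) B) ((if a = b then 0 else 1) + editDist A B)) := by
  simp [editDist, levenshtein, Levenshtein.defaultCost]

lemma editDist_cons_cons_cases (a : α) (A : List α) (b : α) (B : List α) :
    editDist (a :: A) (b :: B) = 1 + editDist A (b :: B) ∨
      editDist (a :: A) (b :: B) = 1 + editDist (a :: A) B ∨
      editDist (a :: A) (b :: B) = (if a = b then 0 else 1) + editDist A B := by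
  rw [editDist_cons_cons]
  omega

lemma editDist_cons_left_le (a : α) (A B : List α) :
    editDist (a :: A) B ≤ 1 + editDist A B := by
  cases B with
  | nil => simp [add_comm]
  | cons b B => exact (editDist_cons_cons a A b B).trans_le (min_le_left _ _)

lemma editDist_cons_right_le (A : List α) (b : α) (B : List α) :
    editDist A (b :: B) ≤ 1 + editDist A B := by
  cases A with
  | nil => simp [add_comm]
  | cons a A =>
    exact (editDist_cons_cons a A b B).trans_le ((min_le_right _ _).trans (min_le_left _ _))

lemma editDist_cons_cons_le (a : α) (A : List α) (b : α) (B : List α) :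
    editDist (a :: A) (b :: B) ≤ (if a = b then 0 else 1) + editDist A B :=
  (editDist_cons_cons a A b B).trans_le ((min_le_right _ _).trans (min_le_right _ _))

lemma editDist_append_le_add : ∀ (A₁ A₂ B₁ B₂ : List α),
    editDist (A₁ ++ A₂) (B₁ ++ B₂) ≤ editDist A₁ B₁ + editDist A₂ B₂
  | [], A₂, [], B₂ => by simp
  | [], A₂, b :: B₁, B₂ => by
    have ih := editDist_append_le_add [] A₂ B₁ B₂
    have := editDist_cons_right_le A₂ b (B₁ ++ B₂)
    simp only [List.nil_append, List.cons_append, editDist_nil_left,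
      List.length_cons] at ih this ⊢
    omega
  | a :: A₁, A₂, [], B₂ => by
    have ih := editDist_append_le_add A₁ A₂ [] B₂
    have := editDist_cons_left_le a (A₁ ++ A₂) B₂
    simp only [List.nil_append, List.cons_append, editDist_nil_right,
      List.length_cons] at ih this ⊢
    omega
  | a :: A₁, A₂, b :: B₁, B₂ => by
    have hdel := editDist_cons_left_le a (A₁ ++ A₂) (b :: (B₁ ++ B₂))
    have hins := editDist_cons_right_le (a :: (A₁ ++ A₂)) b (B₁ ++ B₂)
    have hsub := editDist_cons_cons_le a (A₁ ++ A₂) b (B₁ ++ B₂)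
    have ih_del := editDist_append_le_add A₁ A₂ (b :: B₁) B₂
    have ih_ins := editDist_append_le_add (a :: A₁) A₂ B₁ B₂
    have ih_sub := editDist_append_le_add A₁ A₂ B₁ B₂
    simp only [List.cons_append] at *
    rcases editDist_cons_cons_cases a A₁ b B₁ with h | h | h <;> omega
  termination_by A₁ _ B₁ _ => A₁.length + B₁.length

lemma exists_editDist_take_add_editDist_drop_le : ∀ (A₁ A₂ B : List α),
    ∃ y ≤ B.length,
      editDist A₁ (B.take y) + editDist A₂ (B.drop y) ≤ editDist (A₁ ++ A₂) B
  | [], A₂, B => ⟨0, by simp⟩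
  | a :: A₁, A₂, [] => ⟨0, by simp [Nat.add_right_comm]⟩
  | a :: A₁, A₂, b :: B => by
    rw [List.cons_append]
    rcases editDist_cons_cons_cases a (A₁ ++ A₂) b B with h | h | h <;> rw [h]
    · obtain ⟨y, hy, hle⟩ := exists_editDist_take_add_editDist_drop_le A₁ A₂ (b :: B)
      have := editDist_cons_left_le a A₁ ((b :: B).take y)
      exact ⟨y, hy, by omega⟩
    · obtain ⟨y, hy, hle⟩ := exists_editDist_take_add_editDist_drop_le (a :: A₁) A₂ B
      have := editDist_cons_right_le (a :: A₁) b (B.take y)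
      rw [List.cons_append] at hle
      refine ⟨y + 1, by simpa using hy, ?_⟩
      simp only [List.take_succ_cons, List.drop_succ_cons]
      omega
    · obtain ⟨y, hy, hle⟩ := exists_editDist_take_add_editDist_drop_le A₁ A₂ B
      have := editDist_cons_cons_le a A₁ b (B.take y)
      refine ⟨y + 1, by simpa using hy, ?_⟩
      simp only [List.take_succ_cons, List.drop_succ_cons]
      omega
  termination_by A₁ _ B => A₁.length + B.length

lemma exists_editDist_append_eq_add (A₁ A₂ B : List α) :
    ∃ y ≤ B.length,
      editDist (A₁ ++ A₂) B = editDist A₁ (B.take y) + editDist A₂ (B.drop y) := by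
  obtain ⟨y, hy, hle⟩ := exists_editDist_take_add_editDist_drop_le A₁ A₂ B
  refine ⟨y, hy, le_antisymm ?_ hle⟩
  simpa using editDist_append_le_add A₁ A₂ (B.take y) (B.drop y)

lemma abs_length_sub_length_le_editDist : ∀ (A B : List α),
    |(A.length : ℤ) - B.length| ≤ editDist A B
  | [], B => by simp
  | a :: A, [] => by simp [abs_of_nonneg, add_nonneg]
  | a :: A, b :: B => by
    have ih_del := abs_length_sub_length_le_editDist A (b :: B)
    have ih_ins := abs_length_sub_length_le_editDist (a :: A) B
    have ih_sub := abs_length_sub_length_le_editDist A B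
    simp only [abs_le, List.length_cons] at *
    push_cast at *
    rcases editDist_cons_cons_cases a A b B with h | h | h <;> rw [h] <;> push_cast <;> omega
  termination_by A B => A.length + B.length

end EditDist

/-- Band localization of an optimal crossing point: with `k = d(A₁ ++ A₂, B)`, some optimal
split point `y` of `B` satisfies `|y - |A₁|| ≤ k`, i.e. an optimal edit path can be chosen to
cross every row of the DP grid within the diagonal band of half-width `k`. -/
theorem editDist_exists_split_in_band {α : Type*} [DecidableEq α] (A₁ A₂ B : List α) :
    ∃ y : ℕ, y ≤ B.length ∧
      |(y : ℤ) - (A₁.length : ℤ)| ≤ (editDist (A₁ ++ A₂) B : ℤ) ∧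
      editDist (A₁ ++ A₂) B = editDist A₁ (B.take y) + editDist A₂ (B.drop y) := by
  obtain ⟨y, hy, hsplit⟩ := exists_editDist_append_eq_add A₁ A₂ B
  refine ⟨y, hy, ?_, hsplit⟩
  calc |(y : ℤ) - A₁.length| = |(A₁.length : ℤ) - (B.take y).length| := by
        rw [abs_sub_comm, List.length_take_of_le hy]
    _ ≤ editDist A₁ (B.take y) := abs_length_sub_length_le_editDist A₁ (B.take y)
    _ ≤ editDist (A₁ ++ A₂) B := by rw [hsplit]; push_cast; omega
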